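/- arXiv:2404.10216 — 2 statements merged into one kernel-verified Lean document; each statement's English description precedes it below -/
import Mathlib

section
/- Let D = (E, F) be a proper set system, a, b ∈ E distinct, and A ⊆ E with |A ∩ {a,b}| = 1, and assume D'_ab is proper. Then the minimum sizes of feasible sets of the twists agree, r((D * A)_min) = r((D'_ab * A)_min), and likewise the maximum sizes agree, r((D * A)_max) = r((D'_ab * A)_max). -/
open scoped symmDiff

namespace SetSystem

variable {α : Type*} [DecidableEq α]

/-- The family `{F ∪ {a} : F ∪ {b} ∈ 𝓕 and F ⊆ E \ {a,b}}` used in handle sliding. -/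
def slideSet (E : Finset α) (a b : α) (𝓕 : Finset (Finset α)) : Finset (Finset α) :=
  ((E \ {a, b}).powerset.filter (fun X => insert b X ∈ 𝓕)).image (fun X => insert a X)

/-- Handle sliding of `a` over `b`: `𝓕 ∆ {F ∪ {a} : F ∪ {b} ∈ 𝓕, F ⊆ E \ {a,b}}`. -/
def handleSlide (E : Finset α) (a b : α) (𝓕 : Finset (Finset α)) : Finset (Finset α) :=
  𝓕 ∆ slideSet E a b 𝓕

/-- The family `{F ∪ {a,b} : F ∈ 𝓕 and F ⊆ E \ {a,b}}` used in exchanging handle ends. -/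
def exchSet (E : Finset α) (a b : α) (𝓕 : Finset (Finset α)) : Finset (Finset α) :=
  ((E \ {a, b}).powerset.filter (fun X => X ∈ 𝓕)).image (fun X => insert a (insert b X))

/-- Exchanging handle ends of `a` and `b`: `𝓕 ∆ {F ∪ {a,b} : F ∈ 𝓕, F ⊆ E \ {a,b}}`. -/
def exchEnds (E : Finset α) (a b : α) (𝓕 : Finset (Finset α)) : Finset (Finset α) :=
  𝓕 ∆ exchSet E a b 𝓕

/-- The twist of a set system by `A`: feasible sets become `A ∆ X` for `X` feasible. -/
def twist (A : Finset α) (𝓕 : Finset (Finset α)) : Finset (Finset α) :=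
  𝓕.image (fun X => A ∆ X)

/-- `r(D_max)`: size of a largest feasible set. -/
def rmax (𝓕 : Finset (Finset α)) : ℕ := 𝓕.sup Finset.card

/-- `r(D_min)`: size of a smallest feasible set (0 for the empty family). -/
def rmin (𝓕 : Finset (Finset α)) : ℕ := ((𝓕.image Finset.card).min).untopD 0

/-- The width `w(D) = r(D_max) - r(D_min)`. -/
def width (𝓕 : Finset (Finset α)) : ℕ := rmax 𝓕 - rmin 𝓕

/-- The twist polynomial `∂ω_D(z) = Σ_{A ⊆ E} z^{w(D*A)}`. -/
noncomputable def twistPoly (E : Finset α) (𝓕 : Finset (Finset α)) : Polynomial ℤ :=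
  ∑ A ∈ E.powerset, Polynomial.X ^ width (twist A 𝓕)

/-- A (proper) delta-matroid: a nonempty family satisfying the symmetric exchange axiom. -/
def IsDeltaMatroid (𝓕 : Finset (Finset α)) : Prop :=
  𝓕.Nonempty ∧ ∀ X ∈ 𝓕, ∀ Y ∈ 𝓕, ∀ u ∈ X ∆ Y, ∃ v ∈ X ∆ Y, X ∆ ({u, v} : Finset α) ∈ 𝓕

/-- A set system on ground set `E` is binary if some twist of it equals `D(C)` for a
symmetric matrix `C` over `GF(2)` indexed by `E`: the feasible sets of `D(C)` are those
`B ⊆ E` whose principal submatrix `C[B]` is nonsingular (with `C[∅]` nonsingular). -/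
def IsBinary (E : Finset α) (𝓕 : Finset (Finset α)) : Prop :=
  ∃ A ⊆ E, ∃ C : α → α → ZMod 2, (∀ i j, C i j = C j i) ∧
    ∀ B : Finset α, B ∈ twist A 𝓕 ↔
      B ⊆ E ∧ (Matrix.of fun i j : ↥B => C i.1 j.1).det ≠ 0

/-- `e` is a loop: it lies in no feasible set. -/
def IsLoop (𝓕 : Finset (Finset α)) (e : α) : Prop := ∀ X ∈ 𝓕, e ∉ X

/-- `e` is a coloop: it lies in every feasible set. -/
def IsColoop (𝓕 : Finset (Finset α)) (e : α) : Prop := ∀ X ∈ 𝓕, e ∈ X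

/-- Deletion of `e` (acting on the feasible family). -/
def deleteElem (𝓕 : Finset (Finset α)) (e : α) : Finset (Finset α) :=
  if ∀ X ∈ 𝓕, e ∈ X then 𝓕.image (fun X => X.erase e)
  else 𝓕.filter (fun X => e ∉ X)

/-- Contraction of `e`: `D / e = (D * {e}) \ e`. -/
def contractElem (𝓕 : Finset (Finset α)) (e : α) : Finset (Finset α) :=
  deleteElem (twist {e} 𝓕) e



/-!
Exchanging handle ends only adds or removes sets `F ∪ {a, b}` with `F` feasible and
`a, b ∉ F`, and such an `F` stays feasible. When `A` meets `{a, b}` in exactly one element,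
`A ∆ (F ∪ {a, b})` arises from `A ∆ F` by swapping one of `a`, `b` for the other, so both have
the same size. Hence `D * A` and `D'_ab * A` realize the same sizes of feasible sets.
-/

open Finset

theorem _root_.Finset.card_symmDiff_add_two_mul_card_inter (s t : Finset α) :
    #(s ∆ t) + 2 * #(s ∩ t) = #s + #t := by
  rw [symmDiff_eq_sup_sdiff_inf, sup_eq_union, inf_eq_inter,
    card_sdiff_of_subset inter_subset_union, ← card_union_add_card_inter s t]
  have := card_le_card (inter_subset_union (s := s) (t := t))
  omega

theorem _root_.Finset.card_symmDiff_eq_of_two_mul_card_inter_eq {s t : Finset α}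
    (h : 2 * #(s ∩ t) = #t) : #(s ∆ t) = #s := by
  have := card_symmDiff_add_two_mul_card_inter s t
  omega

theorem _root_.Finset.image_symmDiff_eq_image {β : Type*} [DecidableEq β]
    {𝓕 𝓢 : Finset (Finset α)} {f : Finset α → β} (h : ∀ X ∈ 𝓢, ∃ Y ∈ 𝓕, Y ∉ 𝓢 ∧ f Y = f X) :
    (𝓕 ∆ 𝓢).image f = 𝓕.image f := by
  ext y
  simp only [mem_image, mem_symmDiff]
  constructor
  · rintro ⟨X, ⟨hX, -⟩ | ⟨hX, -⟩, rfl⟩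
    · exact ⟨X, hX, rfl⟩
    · obtain ⟨Y, hY, -, hfY⟩ := h X hX
      exact ⟨Y, hY, hfY⟩
  · rintro ⟨X, hX, rfl⟩
    by_cases hXS : X ∈ 𝓢
    · obtain ⟨Y, hY, hYS, hfY⟩ := h X hXS
      exact ⟨Y, Or.inl ⟨hY, hYS⟩, hfY⟩
    · exact ⟨X, Or.inl ⟨hX, hXS⟩, rfl⟩

theorem card_symmDiff_insert_insert {A F : Finset α} {a b : α} (hab : a ≠ b)
    (hA : #(A ∩ {a, b}) = 1) (haF : a ∉ F) (hbF : b ∉ F) :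
    #(A ∆ insert a (insert b F)) = #(A ∆ F) := by
  have hdisj : Disjoint F {a, b} := by simp [haF, hbF]
  have hins : insert a (insert b F) = F ∆ {a, b} := by
    rw [symmDiff_eq_union hdisj]; ext; simp
  have hinter : (A ∆ F) ∩ {a, b} = A ∩ {a, b} := by
    rw [← inf_eq_inter, inf_symmDiff_distrib_right, inf_eq_inter, inf_eq_inter,
      disjoint_iff_inter_eq_empty.1 hdisj, ← bot_eq_empty, symmDiff_bot]
  rw [hins, ← symmDiff_assoc]
  exact card_symmDiff_eq_of_two_mul_card_inter_eq (by rw [hinter, hA, card_pair hab])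

theorem exists_of_mem_exchSet {E : Finset α} {a b : α} {𝓕 : Finset (Finset α)} {X : Finset α}
    (hX : X ∈ exchSet E a b 𝓕) : ∃ F ∈ 𝓕, a ∉ F ∧ b ∉ F ∧ insert a (insert b F) = X := by
  simp only [exchSet, mem_image, mem_filter, mem_powerset] at hX
  obtain ⟨F, ⟨hFE, hF𝓕⟩, rfl⟩ := hX
  exact ⟨F, hF𝓕, fun h => by simpa using hFE h, fun h => by simpa using hFE h, rfl⟩

theorem image_card_twist_exchEnds (E : Finset α) (𝓕 : Finset (Finset α)) {a b : α} (hab : a ≠ b)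
    {A : Finset α} (hA : #(A ∩ {a, b}) = 1) :
    (twist A (exchEnds E a b 𝓕)).image card = (twist A 𝓕).image card := by
  simp only [twist, exchEnds, image_image]
  refine image_symmDiff_eq_image fun X hX => ?_
  obtain ⟨F, hF, haF, hbF, rfl⟩ := exists_of_mem_exchSet hX
  refine ⟨F, hF, fun hF' => ?_, (card_symmDiff_insert_insert hab hA haF hbF).symm⟩
  obtain ⟨G, -, -, -, hG⟩ := exists_of_mem_exchSet hF'
  exact haF (hG ▸ mem_insert_self a _)

theorem rmin_rmax_twist_exchEnds_general (E : Finset α) (𝓕 : Finset (Finset α))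
    (a b : α) (hab : a ≠ b)
    (A : Finset α) (hcard : (A ∩ {a, b}).card = 1) :
    rmin (twist A 𝓕) = rmin (twist A (exchEnds E a b 𝓕)) ∧
    rmax (twist A 𝓕) = rmax (twist A (exchEnds E a b 𝓕)) := by
  have h := (image_card_twist_exchEnds E 𝓕 hab hcard).symm
  refine ⟨by rw [rmin, rmin, h], ?_⟩
  rw [rmax, rmax, ← Function.id_comp card, ← sup_image, h, sup_image]

/-- If `|A ∩ {a,b}| = 1`, then twisting by `A` gives equal minimum and equal
maximum feasible-set sizes for `D` and the system `D'_ab`. -/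
theorem rmin_rmax_twist_exchEnds (E : Finset α) (𝓕 : Finset (Finset α))
    (h𝓕 : ∀ X ∈ 𝓕, X ⊆ E) (hprop : 𝓕.Nonempty)
    (a b : α) (ha : a ∈ E) (hb : b ∈ E) (hab : a ≠ b)
    (hprop' : (exchEnds E a b 𝓕).Nonempty)
    (A : Finset α) (hA : A ⊆ E) (hcard : (A ∩ {a, b}).card = 1) :
    rmin (twist A 𝓕) = rmin (twist A (exchEnds E a b 𝓕)) ∧
    rmax (twist A 𝓕) = rmax (twist A (exchEnds E a b 𝓕)) :=
  rmin_rmax_twist_exchEnds_general E 𝓕 a b hab A hcard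

end SetSystem
end

section
/- The twist polynomial of a set system satisfies the four-term relation: for any proper set system D = (E, F) and distinct a, b ∈ E such that D'_ab, D̃_ab and D̃'_ab are proper, ∂ω_D(z) + ∂ω_{D̃'_ab}(z) − ∂ω_{D'_ab}(z) − ∂ω_{D̃_ab}(z) = 0, where D̃_ab, D'_ab and D̃'_ab are obtained from D by handle sliding a over b, by exchanging handle ends of a and b, and by performing both operations, respectively. -/
/-!
The width of `D * A` only depends on the set of sizes `|A ∆ X|`, `X ∈ 𝓕`. Handle sliding toggles
sets `X ∪ {a}` whose partner `X ∪ {b}` is feasible and untouched; when `a` and `b` are both in or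
both outside `A`, partners have the same size after twisting by `A`, so sliding preserves
`w(D * A)`. When exactly one of `a`, `b` lies in `A`, the same argument applies to exchanging
handle ends, which toggles sets `X ∪ {a, b}` with feasible partner `X`. As the two operations
commute, the four summands `z ^ w(· * A)` cancel in pairs for every `A ⊆ E`.
-/

open scoped symmDiff

namespace SetSystem

variable {α : Type*} [DecidableEq α]

lemma _root_.Finset.card_symmDiff_insert_add_one_of_mem {A X : Finset α} {a : α} (ha : a ∈ A)
    (haX : a ∉ X) :
    (A ∆ insert a X).card + 1 = (A ∆ X).card := by
  have h : A ∆ insert a X = (A ∆ X).erase a := by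
    ext x
    by_cases hx : x = a <;> simp [Finset.mem_symmDiff, hx, ha, haX]
  rw [h, Finset.card_erase_add_one (Finset.mem_symmDiff.2 (Or.inl ⟨ha, haX⟩))]

lemma _root_.Finset.card_symmDiff_insert_of_notMem {A X : Finset α} {a : α} (ha : a ∉ A)
    (haX : a ∉ X) :
    (A ∆ insert a X).card = (A ∆ X).card + 1 := by
  have h : A ∆ insert a X = insert a (A ∆ X) := by
    ext x
    by_cases hx : x = a <;> simp [Finset.mem_symmDiff, hx, ha, haX]
  rw [h, Finset.card_insert_of_notMem (by simp [Finset.mem_symmDiff, ha, haX])]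

lemma _root_.Finset.card_symmDiff_insert_eq_of_mem_iff {A X : Finset α} {a b : α} (haX : a ∉ X)
    (hbX : b ∉ X) (hA : a ∈ A ↔ b ∈ A) : (A ∆ insert a X).card = (A ∆ insert b X).card := by
  by_cases haA : a ∈ A
  · have := Finset.card_symmDiff_insert_add_one_of_mem haA haX
    have := Finset.card_symmDiff_insert_add_one_of_mem (hA.1 haA) hbX
    omega
  · rw [Finset.card_symmDiff_insert_of_notMem haA haX,
      Finset.card_symmDiff_insert_of_notMem (mt hA.2 haA) hbX]

lemma _root_.Finset.card_symmDiff_insert_insert_eq_of_not_mem_iff {A X : Finset α} {a b : α}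
    (hab : a ≠ b) (haX : a ∉ X) (hbX : b ∉ X) (hA : ¬(a ∈ A ↔ b ∈ A)) :
    (A ∆ insert a (insert b X)).card = (A ∆ X).card := by
  have haX' : a ∉ insert b X := by simp [hab, haX]
  by_cases haA : a ∈ A
  · have hbA : b ∉ A := fun hbA => hA (iff_of_true haA hbA)
    have := Finset.card_symmDiff_insert_add_one_of_mem haA haX'
    have := Finset.card_symmDiff_insert_of_notMem hbA hbX
    omega
  · have hbA : b ∈ A := by_contra fun hbA => hA (iff_of_false haA hbA)
    have := Finset.card_symmDiff_insert_of_notMem haA haX'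
    have := Finset.card_symmDiff_insert_add_one_of_mem hbA hbX
    omega

lemma _root_.Finset.image_symmDiff_eq_of_exists_partner {β γ : Type*} [DecidableEq β]
    [DecidableEq γ] (f : β → γ) {F S : Finset β} (h : ∀ X ∈ S, ∃ Y ∈ F, Y ∉ S ∧ f Y = f X) :
    (F ∆ S).image f = F.image f := by
  ext n
  simp only [Finset.mem_image, Finset.mem_symmDiff]
  constructor
  · rintro ⟨X, ⟨hXF, -⟩ | ⟨hXS, -⟩, rfl⟩
    · exact ⟨X, hXF, rfl⟩
    · obtain ⟨Y, hYF, -, hY⟩ := h X hXS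
      exact ⟨Y, hYF, hY⟩
  · rintro ⟨X, hXF, rfl⟩
    by_cases hXS : X ∈ S
    · obtain ⟨Y, hYF, hYS, hY⟩ := h X hXS
      exact ⟨Y, Or.inl ⟨hYF, hYS⟩, hY⟩
    · exact ⟨X, Or.inl ⟨hXF, hXS⟩, rfl⟩

lemma width_eq_of_image_card_eq {β : Type*} {F G : Finset (Finset β)}
    (h : F.image Finset.card = G.image Finset.card) : width F = width G := by
  have rmax_eq (G : Finset (Finset β)) : rmax G = (G.image Finset.card).sup id :=
    (Finset.sup_image G Finset.card id).symm
  rw [width, width, rmax_eq, rmax_eq, rmin, rmin, h]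

lemma image_card_twist (A : Finset α) (F : Finset (Finset α)) :
    (twist A F).image Finset.card = F.image (fun X => (A ∆ X).card) := by
  rw [twist, Finset.image_image]
  rfl

lemma width_twist_symmDiff_eq_of_exists_partner {A : Finset α} {F S : Finset (Finset α)}
    (h : ∀ X ∈ S, ∃ Y ∈ F, Y ∉ S ∧ (A ∆ Y).card = (A ∆ X).card) :
    width (twist A (F ∆ S)) = width (twist A F) := by
  apply width_eq_of_image_card_eq
  rw [image_card_twist, image_card_twist]
  exact Finset.image_symmDiff_eq_of_exists_partner _ h

variable {E : Finset α} {a b : α} {F : Finset (Finset α)}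

lemma mem_slideSet {Y : Finset α} :
    Y ∈ slideSet E a b F ↔ ∃ X ⊆ E \ {a, b}, insert b X ∈ F ∧ insert a X = Y := by
  simp [slideSet, and_assoc]

lemma mem_exchSet {Y : Finset α} :
    Y ∈ exchSet E a b F ↔ ∃ X ⊆ E \ {a, b}, X ∈ F ∧ insert a (insert b X) = Y := by
  simp [exchSet, and_assoc]

lemma mem_of_mem_slideSet {Y : Finset α} (hY : Y ∈ slideSet E a b F) : a ∈ Y := by
  obtain ⟨X, -, -, rfl⟩ := mem_slideSet.1 hY
  exact Finset.mem_insert_self a X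

lemma mem_of_mem_exchSet {Y : Finset α} (hY : Y ∈ exchSet E a b F) : a ∈ Y := by
  obtain ⟨X, -, -, rfl⟩ := mem_exchSet.1 hY
  exact Finset.mem_insert_self a _

lemma notMem_of_subset_sdiff_pair {X : Finset α} (hX : X ⊆ E \ {a, b}) : a ∉ X ∧ b ∉ X :=
  ⟨fun h => by simpa using hX h, fun h => by simpa using hX h⟩

lemma width_twist_handleSlide (hab : a ≠ b) {A : Finset α} (hA : a ∈ A ↔ b ∈ A) :
    width (twist A (handleSlide E a b F)) = width (twist A F) := by
  refine width_twist_symmDiff_eq_of_exists_partner fun Y hY => ?_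
  obtain ⟨X, hXE, hXF, rfl⟩ := mem_slideSet.1 hY
  obtain ⟨haX, hbX⟩ := notMem_of_subset_sdiff_pair hXE
  refine ⟨insert b X, hXF, fun h => ?_,
    (Finset.card_symmDiff_insert_eq_of_mem_iff haX hbX hA).symm⟩
  simpa [hab, haX] using mem_of_mem_slideSet h

lemma width_twist_exchEnds (hab : a ≠ b) {A : Finset α} (hA : ¬(a ∈ A ↔ b ∈ A)) :
    width (twist A (exchEnds E a b F)) = width (twist A F) := by
  refine width_twist_symmDiff_eq_of_exists_partner fun Y hY => ?_
  obtain ⟨X, hXE, hXF, rfl⟩ := mem_exchSet.1 hY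
  obtain ⟨haX, hbX⟩ := notMem_of_subset_sdiff_pair hXE
  exact ⟨X, hXF, fun h => haX (mem_of_mem_exchSet h),
    (Finset.card_symmDiff_insert_insert_eq_of_not_mem_iff hab haX hbX hA).symm⟩

lemma slideSet_exchEnds (hab : a ≠ b) : slideSet E a b (exchEnds E a b F) = slideSet E a b F := by
  rw [slideSet, slideSet]
  congr 1
  refine Finset.filter_congr fun X hX => ?_
  have haX := (notMem_of_subset_sdiff_pair (Finset.mem_powerset.1 hX)).1
  have hX : insert b X ∉ exchSet E a b F := fun h => by
    simpa [hab, haX] using mem_of_mem_exchSet h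
  simp [exchEnds, Finset.mem_symmDiff, hX]

lemma exchSet_handleSlide : exchSet E a b (handleSlide E a b F) = exchSet E a b F := by
  rw [exchSet, exchSet]
  congr 1
  refine Finset.filter_congr fun X hX => ?_
  have haX := (notMem_of_subset_sdiff_pair (Finset.mem_powerset.1 hX)).1
  have hX : X ∉ slideSet E a b F := fun h => haX (mem_of_mem_slideSet h)
  simp [handleSlide, Finset.mem_symmDiff, hX]

lemma handleSlide_exchEnds_comm (hab : a ≠ b) :
    handleSlide E a b (exchEnds E a b F) = exchEnds E a b (handleSlide E a b F) := by
  rw [handleSlide, slideSet_exchEnds hab, exchEnds, exchEnds, exchSet_handleSlide, handleSlide,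
    symmDiff_right_comm]

theorem twistPoly_four_term_general (E : Finset α) (𝓕 : Finset (Finset α))
    (a b : α) (hab : a ≠ b) :
    twistPoly E 𝓕 + twistPoly E (handleSlide E a b (exchEnds E a b 𝓕))
      - twistPoly E (exchEnds E a b 𝓕) - twistPoly E (handleSlide E a b 𝓕) = 0 := by
  have summand : ∀ A ∈ E.powerset,
      (Polynomial.X : Polynomial ℤ) ^ width (twist A 𝓕)
        + Polynomial.X ^ width (twist A (handleSlide E a b (exchEnds E a b 𝓕)))
      = Polynomial.X ^ width (twist A (exchEnds E a b 𝓕))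
        + Polynomial.X ^ width (twist A (handleSlide E a b 𝓕)) := by
    intro A _
    by_cases hA : a ∈ A ↔ b ∈ A
    · rw [width_twist_handleSlide hab hA, width_twist_handleSlide hab hA, add_comm]
    · rw [handleSlide_exchEnds_comm hab, width_twist_exchEnds hab hA,
        width_twist_exchEnds hab hA]
  have h : twistPoly E 𝓕 + twistPoly E (handleSlide E a b (exchEnds E a b 𝓕))
      = twistPoly E (exchEnds E a b 𝓕) + twistPoly E (handleSlide E a b 𝓕) := by
    simp only [twistPoly, ← Finset.sum_add_distrib]
    exact Finset.sum_congr rfl summand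
  linear_combination h

/-- The twist polynomial of a set system satisfies the four-term relation. -/
theorem twistPoly_four_term (E : Finset α) (𝓕 : Finset (Finset α))
    (h𝓕 : ∀ X ∈ 𝓕, X ⊆ E) (hprop : 𝓕.Nonempty)
    (a b : α) (ha : a ∈ E) (hb : b ∈ E) (hab : a ≠ b)
    (hprop₁ : (exchEnds E a b 𝓕).Nonempty)
    (hprop₂ : (handleSlide E a b 𝓕).Nonempty)
    (hprop₃ : (handleSlide E a b (exchEnds E a b 𝓕)).Nonempty) :
    twistPoly E 𝓕 + twistPoly E (handleSlide E a b (exchEnds E a b 𝓕))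
      - twistPoly E (exchEnds E a b 𝓕) - twistPoly E (handleSlide E a b 𝓕) = 0 :=
  twistPoly_four_term_general E 𝓕 a b hab

end SetSystem
end
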